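/- For X ~ McN(a,b,c,0,1), E[ log(1 - Φ(X)^c) ] = -(1/B(a,b)) Σ_{n=1}^∞ B(n+a, b)/n. -/

import Mathlib

open Real MeasureTheory

noncomputable def betaFn (a b : ℝ) : ℝ := ∫ t in (0:ℝ)..1, t ^ (a-1) * (1-t) ^ (b-1)

noncomputable def gaussPdf (x : ℝ) : ℝ := (Real.sqrt (2 * Real.pi))⁻¹ * Real.exp (-x^2/2)

noncomputable def stdNormCdf (x : ℝ) : ℝ := ∫ t in Set.Iic x, gaussPdf t

noncomputable def mcNStdPdf (a b c x : ℝ) : ℝ :=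
  (c / betaFn a b) * gaussPdf x * stdNormCdf x ^ (a*c - 1) * (1 - stdNormCdf x ^ c) ^ (b - 1)

/-!
The map `x ↦ Φ(x)^c` is a strictly increasing differentiable bijection of `ℝ` onto `(0, 1)` with
derivative `c φ Φ^{c-1}`, and the McN density is `B(a,b)⁻¹` times this derivative times the beta
integrand `u^{a-1} (1-u)^{b-1}` at `u = Φ(x)^c`. Substituting `u = Φ(x)^c` therefore turns the
expectation into `B(a,b)⁻¹ ∫₀¹ u^{a-1} (1-u)^{b-1} log (1-u) du`. Expanding
`-log (1-u) = ∑ u^{n+1}/(n+1)` and integrating term by term gives the series of beta functions;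
the interchange is dominated convergence, the terms being nonnegative with integrable sum because
`-log (1-u) ≤ (2/b) (1-u)^{-b/2}`.
-/

open Set Filter Topology ProbabilityTheory

theorem StrictMono.range_eq_Ioo_of_tendsto {α β : Type*} [LinearOrder α] [Nonempty α]
    [NoMinOrder α] [NoMaxOrder α] [TopologicalSpace α] [PreconnectedSpace α] [LinearOrder β]
    [TopologicalSpace β] [OrderClosedTopology β] {f : α → β} (hmono : StrictMono f)
    (hcont : Continuous f) {l u : β} (hbot : Tendsto f atBot (𝓝 l)) (htop : Tendsto f atTop (𝓝 u)) :
    range f = Ioo l u := by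
  refine Subset.antisymm ?_ fun y hy => ?_
  · rintro _ ⟨x, rfl⟩
    obtain ⟨x', hx'⟩ := exists_gt x
    obtain ⟨x'', hx''⟩ := exists_lt x
    exact ⟨(hmono.monotone.le_of_tendsto hbot x'').trans_lt (hmono hx''),
      (hmono hx').trans_le (hmono.monotone.ge_of_tendsto htop x')⟩
  · exact mem_range_of_exists_le_of_exists_ge hcont
      ((hbot.eventually (eventually_lt_nhds hy.1)).exists.imp fun _ => le_of_lt)
      ((htop.eventually (eventually_gt_nhds hy.2)).exists.imp fun _ => le_of_lt)

theorem integral_deriv_mul_comp_eq_setIntegral_range {f f' : ℝ → ℝ}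
    (hf : ∀ x, HasDerivAt f (f' x) x) (hmono : StrictMono f) (g : ℝ → ℝ) :
    ∫ x, f' x * g (f x) = ∫ y in range f, g y := by
  have h := integral_image_eq_integral_abs_deriv_smul MeasurableSet.univ
    (fun x _ => (hf x).hasDerivWithinAt) hmono.injective.injOn g
  rw [image_univ, Measure.restrict_univ] at h
  rw [h]
  congr 1 with x
  rw [smul_eq_mul, abs_of_nonneg ((hf x).deriv ▸ hmono.monotone.deriv_nonneg)]

lemma neg_log_le_rpow_neg_div {x ε : ℝ} (hx : 0 < x) (hε : 0 < ε) :
    -log x ≤ x ^ (-ε) / ε := by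
  rw [← log_inv, rpow_neg hx.le, ← inv_rpow hx.le]
  exact log_le_rpow_div (inv_nonneg.2 hx.le) hε

lemma gaussPdf_eq_gaussianPDFReal : gaussPdf = gaussianPDFReal 0 1 := by
  ext x
  simp [gaussPdf, gaussianPDFReal]

lemma gaussPdf_pos (x : ℝ) : 0 < gaussPdf x := by
  rw [gaussPdf_eq_gaussianPDFReal]
  exact gaussianPDFReal_pos _ _ _ one_ne_zero

lemma continuous_gaussPdf : Continuous gaussPdf := by
  unfold gaussPdf
  fun_prop

lemma integrable_gaussPdf : Integrable gaussPdf := by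
  rw [gaussPdf_eq_gaussianPDFReal]
  exact integrable_gaussianPDFReal _ _

lemma integral_gaussPdf : ∫ x, gaussPdf x = 1 := by
  rw [gaussPdf_eq_gaussianPDFReal]
  exact integral_gaussianPDFReal_eq_one _ one_ne_zero

lemma hasDerivAt_stdNormCdf (x : ℝ) : HasDerivAt stdNormCdf (gaussPdf x) x := by
  have hsplit : ∀ y, stdNormCdf y = stdNormCdf 0 + ∫ t in (0 : ℝ)..y, gaussPdf t := fun y => by
    rw [stdNormCdf, stdNormCdf, ← intervalIntegral.integral_Iic_sub_Iic
      integrable_gaussPdf.integrableOn integrable_gaussPdf.integrableOn]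
    ring
  refine ((intervalIntegral.integral_hasDerivAt_right (a := 0)
    integrable_gaussPdf.intervalIntegrable (continuous_gaussPdf.stronglyMeasurableAtFilter _ _)
    continuous_gaussPdf.continuousAt).const_add (stdNormCdf 0)).congr_of_eventuallyEq ?_
  exact Eventually.of_forall hsplit

lemma continuous_stdNormCdf : Continuous stdNormCdf :=
  continuous_iff_continuousAt.2 fun x => (hasDerivAt_stdNormCdf x).continuousAt

lemma strictMono_stdNormCdf : StrictMono stdNormCdf :=
  strictMono_of_deriv_pos fun x => (hasDerivAt_stdNormCdf x).deriv ▸ gaussPdf_pos x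

lemma tendsto_stdNormCdf_atTop : Tendsto stdNormCdf atTop (𝓝 1) := by
  rw [← integral_gaussPdf]
  exact (aecover_Iic tendsto_id).integral_tendsto_of_countably_generated integrable_gaussPdf

lemma tendsto_stdNormCdf_atBot : Tendsto stdNormCdf atBot (𝓝 0) := by
  have hcompl : ∀ x, stdNormCdf x = 1 - ∫ t in Ioi x, gaussPdf t := fun x => by
    rw [← integral_gaussPdf, ← intervalIntegral.integral_Iic_add_Ioi
      integrable_gaussPdf.integrableOn integrable_gaussPdf.integrableOn, stdNormCdf]
    ring
  have hIoi : Tendsto (fun x => ∫ t in Ioi x, gaussPdf t) atBot (𝓝 1) := by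
    rw [← integral_gaussPdf]
    exact (aecover_Ioi tendsto_id).integral_tendsto_of_countably_generated integrable_gaussPdf
  simpa [← hcompl] using (tendsto_const_nhds (x := (1 : ℝ))).sub hIoi

lemma range_stdNormCdf : range stdNormCdf = Ioo 0 1 :=
  strictMono_stdNormCdf.range_eq_Ioo_of_tendsto continuous_stdNormCdf tendsto_stdNormCdf_atBot
    tendsto_stdNormCdf_atTop

lemma stdNormCdf_pos (x : ℝ) : 0 < stdNormCdf x :=
  (range_stdNormCdf ▸ mem_range_self x : stdNormCdf x ∈ Ioo 0 1).1

lemma strictMono_stdNormCdf_rpow {c : ℝ} (hc : 0 < c) : StrictMono fun x => stdNormCdf x ^ c :=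
  fun _ _ hxy => rpow_lt_rpow (stdNormCdf_pos _).le (strictMono_stdNormCdf hxy) hc

lemma hasDerivAt_stdNormCdf_rpow (c x : ℝ) :
    HasDerivAt (fun x => stdNormCdf x ^ c) (gaussPdf x * c * stdNormCdf x ^ (c - 1)) x :=
  (hasDerivAt_stdNormCdf x).rpow_const (Or.inl (stdNormCdf_pos x).ne')

lemma range_stdNormCdf_rpow {c : ℝ} (hc : 0 < c) : range (fun x => stdNormCdf x ^ c) = Ioo 0 1 :=
  (strictMono_stdNormCdf_rpow hc).range_eq_Ioo_of_tendsto
    (continuous_stdNormCdf.rpow_const fun _ => Or.inr hc.le)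
    (by simpa [zero_rpow hc.ne'] using tendsto_stdNormCdf_atBot.rpow_const (Or.inr hc.le))
    (by simpa using tendsto_stdNormCdf_atTop.rpow_const (Or.inr hc.le))

lemma integrableOn_beta_integrand {a b : ℝ} (ha : 0 < a) (hb : 0 < b) :
    IntegrableOn (fun t : ℝ => t ^ (a - 1) * (1 - t) ^ (b - 1)) (Ioo 0 1) := by
  have h := (Complex.betaIntegral_convergent (u := a) (v := b) (by simpa) (by simpa)).norm
  rw [intervalIntegrable_iff_integrableOn_Ioo_of_le zero_le_one] at h
  refine h.congr_fun (fun t ht => ?_) measurableSet_Ioo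
  have h1 : (0 : ℝ) < 1 - t := by linarith [ht.2]
  have hcast : (1 : ℂ) - t = ((1 - t : ℝ) : ℂ) := by push_cast; ring
  dsimp only
  rw [norm_mul, hcast, Complex.norm_cpow_eq_rpow_re_of_pos ht.1,
    Complex.norm_cpow_eq_rpow_re_of_pos h1]
  simp

lemma integrableOn_beta_integrand_mul_neg_log {a b : ℝ} (ha : 0 < a) (hb : 0 < b) :
    IntegrableOn (fun u : ℝ => u ^ (a - 1) * (1 - u) ^ (b - 1) * -log (1 - u)) (Ioo 0 1) := by
  refine ((integrableOn_beta_integrand ha (half_pos hb)).const_mul (2 / b)).mono'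
    (Measurable.aestronglyMeasurable (by fun_prop)) ?_
  filter_upwards [ae_restrict_mem measurableSet_Ioo] with u ⟨hu0, hu1⟩
  have h1u : 0 < 1 - u := by linarith
  have hlog : 0 ≤ -log (1 - u) := neg_nonneg.2 (log_nonpos h1u.le (by linarith))
  rw [norm_of_nonneg (by positivity)]
  calc u ^ (a - 1) * (1 - u) ^ (b - 1) * -log (1 - u)
      ≤ u ^ (a - 1) * (1 - u) ^ (b - 1) * ((1 - u) ^ (-(b / 2)) / (b / 2)) := by
        gcongr
        exact neg_log_le_rpow_neg_div h1u (half_pos hb)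
    _ = 2 / b * (u ^ (a - 1) * (1 - u) ^ (b / 2 - 1)) := by
        rw [show b / 2 - 1 = (b - 1) + -(b / 2) by ring, rpow_add h1u]
        field_simp

lemma hasSum_beta_integrand_mul_neg_log (a b : ℝ) {u : ℝ} (hu0 : 0 < u) (hu1 : u < 1) :
    HasSum (fun n : ℕ => u ^ ((n : ℝ) + 1 + a - 1) * (1 - u) ^ (b - 1) / ((n : ℝ) + 1))
      (u ^ (a - 1) * (1 - u) ^ (b - 1) * -log (1 - u)) := by
  refine ((hasSum_pow_div_log_of_abs_lt_one (abs_lt.2 ⟨by linarith, hu1⟩)).mul_left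
    (u ^ (a - 1) * (1 - u) ^ (b - 1))).congr_fun fun n => ?_
  rw [show (n : ℝ) + 1 + a - 1 = (a - 1) + (n + 1 : ℕ) by push_cast; ring, rpow_add hu0,
    rpow_natCast]
  ring

lemma betaFn_eq_integral_Ioo (a b : ℝ) :
    betaFn a b = ∫ t in Ioo 0 1, t ^ (a - 1) * (1 - t) ^ (b - 1) := by
  rw [betaFn, intervalIntegral.integral_of_le zero_le_one, integral_Ioc_eq_integral_Ioo]

lemma hasSum_betaFn_div {a b : ℝ} (ha : 0 < a) (hb : 0 < b) :
    HasSum (fun n : ℕ => betaFn ((n : ℝ) + 1 + a) b / ((n : ℝ) + 1))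
      (∫ u in Ioo 0 1, u ^ (a - 1) * (1 - u) ^ (b - 1) * -log (1 - u)) := by
  set F : ℕ → ℝ → ℝ := fun n u => u ^ ((n : ℝ) + 1 + a - 1) * (1 - u) ^ (b - 1) / ((n : ℝ) + 1)
  have hmem := ae_restrict_mem (μ := volume) (measurableSet_Ioo (a := (0 : ℝ)) (b := 1))
  have hsum : ∀ᵐ u ∂volume.restrict (Ioo 0 1),
      HasSum (fun n => F n u) (u ^ (a - 1) * (1 - u) ^ (b - 1) * -log (1 - u)) := by
    filter_upwards [hmem] with u hu using hasSum_beta_integrand_mul_neg_log a b hu.1 hu.2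
  have hnorm : ∀ n, ∀ᵐ u ∂volume.restrict (Ioo 0 1), ‖F n u‖ ≤ F n u := fun n => by
    filter_upwards [hmem] with u ⟨hu0, hu1⟩
    have : 0 < 1 - u := by linarith
    exact (norm_of_nonneg (by positivity)).le
  have hF := hasSum_integral_of_dominated_convergence F
    (fun n => Measurable.aestronglyMeasurable (by fun_prop)) hnorm
    (hsum.mono fun _ h => h.summable)
    ((integrableOn_beta_integrand_mul_neg_log ha hb).congr_fun_ae
      (hsum.mono fun _ h => h.tsum_eq.symm)) hsum
  refine hF.congr_fun fun n => ?_
  rw [integral_div, betaFn_eq_integral_Ioo]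

/-- E[log(1 - Φ(X)^c)] = -(1/B(a,b)) Σ_{n=1}^∞ B(n+a,b)/n. -/
theorem mcN_expectation_log_one_sub (a b c : ℝ) (ha : 0 < a) (hb : 0 < b) (hc : 0 < c) :
    ∫ x : ℝ, mcNStdPdf a b c x * Real.log (1 - stdNormCdf x ^ c)
      = -(1 / betaFn a b) * ∑' n : ℕ, betaFn (((n:ℝ) + 1) + a) b / ((n:ℝ) + 1) := by
  set h : ℝ → ℝ := fun u => u ^ (a - 1) * (1 - u) ^ (b - 1) * log (1 - u)
  have hintegrand : ∀ x, mcNStdPdf a b c x * log (1 - stdNormCdf x ^ c) =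
      (betaFn a b)⁻¹ * (gaussPdf x * c * stdNormCdf x ^ (c - 1) * h (stdNormCdf x ^ c)) := by
    intro x
    have hpow : stdNormCdf x ^ (a * c - 1) =
        stdNormCdf x ^ (c - 1) * (stdNormCdf x ^ c) ^ (a - 1) := by
      rw [← rpow_mul (stdNormCdf_pos x).le, ← rpow_add (stdNormCdf_pos x)]
      ring_nf
    simp only [mcNStdPdf, h, hpow]
    ring
  rw [integral_congr_ae (Eventually.of_forall hintegrand), integral_const_mul,
    integral_deriv_mul_comp_eq_setIntegral_range (hasDerivAt_stdNormCdf_rpow c)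
      (strictMono_stdNormCdf_rpow hc), range_stdNormCdf_rpow hc, (hasSum_betaFn_div ha hb).tsum_eq]
  simp only [h, mul_neg, integral_neg]
  ring
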